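/- arXiv:1808.00005 — 3 statements merged into one kernel-verified Lean document; each statement's English description precedes it below -/
import Mathlib

section
/- For the three-qubit graph state |Φ⟩ on the star graph with center v1 and leaves v2, v3, applying exp(iα X) on qubit v1 gives the same state as applying exp(iα Z⊗Z) on qubits v2 and v3: (exp(iαX)⊗I⊗I)|Φ⟩ = (I⊗exp(iα Z⊗Z))|Φ⟩. -/
open Matrix Complex

noncomputable def PauliX : Matrix (Fin 2) (Fin 2) ℂ := !![0, 1; 1, 0]
noncomputable def PauliZ : Matrix (Fin 2) (Fin 2) ℂ := !![1, 0; 0, -1]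

abbrev Q3 := Fin 2 × Fin 2 × Fin 2

noncomputable def plus3 : Q3 → ℂ := fun _ => ((Real.sqrt 2 : ℂ)⁻¹)^3

noncomputable def CZ12 : Matrix Q3 Q3 ℂ :=
  fun x y => if x = y then (if x.1 = 1 ∧ x.2.1 = 1 then -1 else 1) else 0

noncomputable def CZ13 : Matrix Q3 Q3 ℂ :=
  fun x y => if x = y then (if x.1 = 1 ∧ x.2.2 = 1 then -1 else 1) else 0

noncomputable def graphState : Q3 → ℂ := CZ12.mulVec (CZ13.mulVec plus3)

noncomputable def expX1 (α : ℝ) : Matrix Q3 Q3 ℂ :=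
  fun x y => (NormedSpace.exp ((Complex.I * (α : ℂ)) • PauliX)) x.1 y.1 *
    (if x.2 = y.2 then 1 else 0)

noncomputable def ZZ : Matrix (Fin 2 × Fin 2) (Fin 2 × Fin 2) ℂ :=
  fun x y => PauliZ x.1 y.1 * PauliZ x.2 y.2

noncomputable def expZZ23 (α : ℝ) : Matrix Q3 Q3 ℂ :=
  fun x y => (if x.1 = y.1 then 1 else 0) *
    (NormedSpace.exp ((Complex.I * (α : ℂ)) • ZZ)) x.2 y.2

-- auxiliary
noncomputable def Hmat : Matrix (Fin 2) (Fin 2) ℂ := !![1, 1; 1, -1]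

lemma Hmat_inv : Hmat⁻¹ = (2:ℂ)⁻¹ • Hmat := by
  apply Matrix.inv_eq_right_inv
  ext i j
  fin_cases i <;> fin_cases j <;>
    simp [Hmat, Matrix.mul_apply, Fin.sum_univ_two] <;> ring

lemma Hmat_isUnit : IsUnit Hmat := by
  apply Matrix.isUnit_iff_isUnit_det _ |>.mpr
  simp [Hmat, Matrix.det_fin_two_of]
  norm_num

lemma diagLike_mulVec (c v : Q3 → ℂ) :
    Matrix.mulVec (fun x y => if x = y then c x else 0) v = fun x => c x * v x := by
  funext x
  simp [Matrix.mulVec, dotProduct, ite_mul, Finset.sum_ite_eq]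

lemma expX_formula (α : ℝ) :
    NormedSpace.exp ((Complex.I * (α : ℂ)) • PauliX) =
      !![(Complex.exp (Complex.I * α) + Complex.exp (-(Complex.I * α)))/2,
         (Complex.exp (Complex.I * α) - Complex.exp (-(Complex.I * α)))/2;
         (Complex.exp (Complex.I * α) - Complex.exp (-(Complex.I * α)))/2,
         (Complex.exp (Complex.I * α) + Complex.exp (-(Complex.I * α)))/2] := by
  have h1 : (Complex.I * (α : ℂ)) • PauliX =
      Hmat * (Matrix.diagonal ![Complex.I * α, -(Complex.I * α)]) * Hmat⁻¹ := by
    rw [Hmat_inv]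
    ext i j
    fin_cases i <;> fin_cases j <;>
      simp [Hmat, PauliX, Matrix.mul_apply, Fin.sum_univ_two, Matrix.vecMul_diagonal, Matrix.diagonal_apply,
        Matrix.vecHead, Matrix.vecTail] <;> ring
  rw [h1, Matrix.exp_conj Hmat _ Hmat_isUnit, Matrix.exp_diagonal, Hmat_inv]
  ext i j
  fin_cases i <;> fin_cases j <;>
    simp [Hmat, Matrix.mul_apply, Fin.sum_univ_two, Matrix.vecMul_diagonal, Matrix.diagonal_apply, Pi.exp_def,
      ← Complex.exp_eq_exp_ℂ, Matrix.vecHead, Matrix.vecTail] <;> ring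

lemma expZZ_formula (α : ℝ) :
    NormedSpace.exp ((Complex.I * (α : ℂ)) • ZZ) =
      Matrix.diagonal (fun x : Fin 2 × Fin 2 =>
        if x.1 = x.2 then Complex.exp (Complex.I * α) else Complex.exp (-(Complex.I * α))) := by
  have h1 : (Complex.I * (α : ℂ)) • ZZ =
      Matrix.diagonal (fun x : Fin 2 × Fin 2 =>
        if x.1 = x.2 then Complex.I * α else -(Complex.I * α)) := by
    ext ⟨a, b⟩ ⟨c, d⟩
    fin_cases a <;> fin_cases b <;> fin_cases c <;> fin_cases d <;>
      simp [ZZ, PauliZ, Matrix.diagonal_apply, Prod.ext_iff]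
  rw [h1, Matrix.exp_diagonal]
  ext ⟨a, b⟩ ⟨c, d⟩
  simp [Matrix.diagonal_apply, Pi.exp_def, ← Complex.exp_eq_exp_ℂ, Prod.ext_iff,
    apply_ite Complex.exp]

lemma graphState_formula (x : Q3) :
    graphState x = (if x.1 = 1 ∧ x.2.1 = 1 then -1 else 1) *
      ((if x.1 = 1 ∧ x.2.2 = 1 then -1 else 1) * ((Real.sqrt 2 : ℂ)⁻¹)^3) := by
  rw [graphState, show CZ13 = (fun x y => if x = y then (if x.1 = 1 ∧ x.2.2 = 1 then -1 else 1) else 0) from rfl,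
    show CZ12 = (fun x y => if x = y then (if x.1 = 1 ∧ x.2.1 = 1 then -1 else 1) else 0) from rfl,
    diagLike_mulVec, diagLike_mulVec]
  simp [plus3]

/-- `(exp(iαX)⊗I⊗I)|Φ⟩ = (I⊗exp(iα Z⊗Z))|Φ⟩` for the star graph state. -/
theorem expX_on_center_eq_expZZ_on_leaves (α : ℝ) :
    (expX1 α).mulVec graphState = (expZZ23 α).mulVec graphState := by
  funext x
  obtain ⟨a, b, c⟩ := x
  simp only [Matrix.mulVec, dotProduct, Fintype.sum_prod_type, Fin.sum_univ_two,
    expX1, expZZ23, expX_formula, expZZ_formula, graphState_formula]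
  fin_cases a <;> fin_cases b <;> fin_cases c <;>
    simp [Matrix.diagonal_apply, Prod.ext_iff] <;> ring
end

section
/- Suppose 8 parties v_1,...,v_8 have local dimensions dim H^{v_k} = 4 for k ≤ 7 and dim H^{v_8} = 2, and suppose they share a tensor product of bipartite entangled states (each of Schmidt rank ≥ 2) fitting within these dimensions, whose distribution graph is connected. Then the distribution graph is a line (path) graph with v_8 as an endpoint, and each bipartite state is a two-qubit state. -/
open Finset

namespace LineTopologyForcedAux

/-- One step of the path-following process: from state `(prev, cur)`,
move to `(cur, next)` where `next` is a neighbor of `cur` different from `prev`. -/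
noncomputable def stepF (E : Finset (Sym2 (Fin 8))) (p : Fin 8 × Fin 8) : Fin 8 × Fin 8 :=
  (p.2, if h : ∃ u, s(p.2, u) ∈ E ∧ u ≠ p.1 then h.choose else p.1)

noncomputable def pf (E : Finset (Sym2 (Fin 8))) (n : ℕ) : Fin 8 × Fin 8 :=
  (stepF E)^[n] (7, 7)

noncomputable def f (E : Finset (Sym2 (Fin 8))) (n : ℕ) : Fin 8 := (pf E n).2

lemma pf_succ (E : Finset (Sym2 (Fin 8))) (n : ℕ) :
    pf E (n+1) = stepF E (pf E n) := Function.iterate_succ_apply' _ _ _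

lemma pf_fst_succ (E : Finset (Sym2 (Fin 8))) (n : ℕ) :
    (pf E (n+1)).1 = f E n := by rw [pf_succ]; rfl

lemma pf_fst_zero (E : Finset (Sym2 (Fin 8))) : (pf E 0).1 = 7 := rfl

lemma f_zero (E : Finset (Sym2 (Fin 8))) : f E 0 = 7 := rfl

lemma f_succ_spec (E : Finset (Sym2 (Fin 8))) (n : ℕ)
    (h : ∃ u, s((pf E n).2, u) ∈ E ∧ u ≠ (pf E n).1) :
    s(f E n, f E (n+1)) ∈ E ∧ f E (n+1) ≠ (pf E n).1 := by
  have h2 : f E (n+1) = (stepF E (pf E n)).2 := by rw [f, pf_succ]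
  rw [h2]
  simp only [stepF, dif_pos h]
  exact h.choose_spec

/-- neighbors of a vertex -/
def N (E : Finset (Sym2 (Fin 8))) (v : Fin 8) : Finset (Fin 8) :=
  univ.filter (fun u => s(v, u) ∈ E)

lemma memN {E : Finset (Sym2 (Fin 8))} {v u : Fin 8} : u ∈ N E v ↔ s(v, u) ∈ E := by
  simp [N]

lemma pair_det {E : Finset (Sym2 (Fin 8))} {v a b c : Fin 8}
    (h2 : (N E v).card ≤ 2) (ha : a ∈ N E v) (hb : b ∈ N E v) (hab : a ≠ b)
    (hc : c ∈ N E v) : c = a ∨ c = b := by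
  have hsub : ({a, b} : Finset (Fin 8)) ⊆ N E v := by
    intro x hx
    rcases mem_insert.mp hx with rfl | hx
    · exact ha
    · rw [mem_singleton.mp hx]; exact hb
  have heq := Finset.eq_of_subset_of_card_le hsub (by rw [Finset.card_pair hab]; exact h2)
  rw [← heq] at hc
  simpa using hc

lemma one_det {E : Finset (Sym2 (Fin 8))} {v a b : Fin 8}
    (h1 : (N E v).card ≤ 1) (ha : a ∈ N E v) (hb : b ∈ N E v) : a = b :=
  Finset.card_le_one.mp h1 _ ha _ hb

end LineTopologyForcedAux

open LineTopologyForcedAux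

/-- eight parties with local dimensions `4,4,4,4,4,4,4,2` share a tensor product
of bipartite entangled states (each of Schmidt rank `r e ≥ 2`) distributed along a connected
graph and fitting within the local dimensions (the product of the local Schmidt ranks of the
states held by a party is at most its dimension).  Then the graph is a path with the eighth
party as an endpoint, and every shared state is a two-qubit state (`r e = 2`). -/
theorem line_topology_forced
    (E : Finset (Sym2 (Fin 8))) (hnd : ∀ e ∈ E, ¬ e.IsDiag)
    (r : Sym2 (Fin 8) → ℕ) (hent : ∀ e ∈ E, 2 ≤ r e)
    (d : Fin 8 → ℕ) (hd : d = fun v => if v = 7 then 2 else 4)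
    (hfit : ∀ v : Fin 8, ∏ e ∈ E.filter (fun e => v ∈ e), r e ≤ d v)
    (hconn : (SimpleGraph.fromEdgeSet (↑E : Set (Sym2 (Fin 8)))).Connected) :
    (∀ e ∈ E, r e = 2) ∧
    ∃ σ : Equiv.Perm (Fin 8), σ 7 = 7 ∧
      E = Finset.image (fun i : Fin 7 => s(σ i.castSucc, σ i.succ)) Finset.univ := by
  subst hd
  have hne : ∀ {a b : Fin 8}, s(a, b) ∈ E → a ≠ b := by
    intro a b h hab
    exact hnd _ h (by rw [hab]; exact Sym2.mk_isDiag_iff.mpr rfl)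
  have pow_le : ∀ k c : ℕ, 2 ^ k ≤ 2 ^ c → k ≤ c := by
    intro k c h
    exact (Nat.pow_le_pow_iff_right (by norm_num)).mp h
  have hdeg : ∀ v : Fin 8, 2 ^ (E.filter (fun e => v ∈ e)).card ≤
      (if v = 7 then 2 else 4 : ℕ) := by
    intro v
    exact le_trans (Finset.pow_card_le_prod _ _ _ (fun e he => hent e (mem_filter.mp he).1))
      (hfit v)
  have hNcard : ∀ v : Fin 8, (N E v).card ≤ (E.filter (fun e => v ∈ e)).card := by
    intro v
    apply Finset.card_le_card_of_injOn (fun u => s(v, u))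
    · intro u hu
      rw [Finset.mem_coe, mem_filter]
      exact ⟨memN.mp hu, by simp⟩
    · intro a _ b _ hab
      exact Sym2.congr_right.mp hab
  have hfcard : ∀ v : Fin 8, v ≠ 7 → (E.filter (fun e => v ∈ e)).card ≤ 2 := by
    intro v hv
    have h1 := hdeg v
    rw [if_neg hv] at h1
    exact pow_le _ 2 (le_trans h1 (by norm_num))
  have hN2 : ∀ v : Fin 8, v ≠ 7 → (N E v).card ≤ 2 := fun v hv =>
    le_trans (hNcard v) (hfcard v hv)
  have hN7 : (N E 7).card ≤ 1 := by
    have h1 := hdeg 7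
    rw [if_pos rfl] at h1
    exact le_trans (hNcard 7) (pow_le _ 1 (le_trans h1 (by norm_num)))
  -- connectivity: a nonempty closed set of vertices is everything
  have hclosed : ∀ S : Finset (Fin 8),
      (∀ v ∈ S, ∀ u, s(v, u) ∈ E → u ∈ S) → S.Nonempty → 8 ≤ S.card := by
    rintro S hS ⟨a, haS⟩
    have key : ∀ x y : Fin 8,
        ∀ _w : (SimpleGraph.fromEdgeSet (↑E : Set (Sym2 (Fin 8)))).Walk x y, x ∈ S → y ∈ S := by
      intro x y w
      induction w with
      | nil => exact id
      | cons h p ih =>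
        intro hx
        exact ih (hS _ hx _ (Finset.mem_coe.mp ((SimpleGraph.fromEdgeSet_adj _).mp h).1))
    have hall : ∀ b : Fin 8, b ∈ S := by
      intro b
      obtain ⟨w⟩ := hconn.preconnected a b
      exact key a b w haS
    calc (8 : ℕ) = (univ : Finset (Fin 8)).card := by simp
      _ ≤ S.card := card_le_card (fun x _ => hall x)
  -- the main induction: f traces an injective path
  have main : ∀ n, n ≤ 7 → (∀ i < n, s(f E i, f E (i+1)) ∈ E) ∧
      (∀ i ≤ n, ∀ j ≤ n, f E i = f E j → i = j) := by
    intro n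
    induction n with
    | zero =>
      exact fun _ => ⟨fun i hi => absurd hi (by omega), fun i hi j hj _ => by omega⟩
    | succ n ih =>
      intro hn7
      obtain ⟨hadj, hinj⟩ := ih (by omega)
      have hex : ∃ u, s((pf E n).2, u) ∈ E ∧ u ≠ (pf E n).1 := by
        by_contra hc
        push_neg at hc
        set S := (range (n+1)).image (f E) with hS
        have hmemS : ∀ i, i ≤ n → f E i ∈ S :=
          fun i hi => mem_image_of_mem _ (mem_range.mpr (by omega))
        have hcl : ∀ v ∈ S, ∀ u, s(v, u) ∈ E → u ∈ S := by
          intro v hv u hu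
          obtain ⟨i, hi, rfl⟩ := mem_image.mp hv
          rw [mem_range] at hi
          rcases Nat.eq_or_lt_of_le (Nat.le_of_lt_succ hi) with hin | hin
          · -- i = n : by assumption u must be (pf E n).1
            subst hin
            have hu7 := hc u hu
            cases i with
            | zero => exact absurd hu7 (Ne.symm (hne hu))
            | succ m =>
              rw [pf_fst_succ] at hu7
              rw [hu7]
              exact hmemS m (by omega)
          · by_cases hi0 : i = 0
            · subst hi0
              have h1 : f E 1 ∈ N E 7 := memN.mpr (hadj 0 (by omega))
              have hu' : u ∈ N E 7 := memN.mpr hu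
              rw [one_det hN7 hu' h1]
              exact hmemS 1 (by omega)
            · have hv7 : f E i ≠ 7 := fun h =>
                hi0 (hinj i (by omega) 0 (by omega) (h.trans (f_zero E).symm))
              have ha : f E (i-1) ∈ N E (f E i) := by
                have h := hadj (i-1) (by omega)
                have he : i - 1 + 1 = i := by omega
                rw [he, Sym2.eq_swap] at h
                exact memN.mpr h
              have hb : f E (i+1) ∈ N E (f E i) := memN.mpr (hadj i (by omega))
              have hab : f E (i-1) ≠ f E (i+1) := fun h => by
                have := hinj (i-1) (by omega) (i+1) (by omega) h
                omega
              rcases pair_det (hN2 _ hv7) ha hb hab (memN.mpr hu) with h | h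
              · rw [h]; exact hmemS (i-1) (by omega)
              · rw [h]; exact hmemS (i+1) (by omega)
        have h8 := hclosed S hcl ⟨f E 0, hmemS 0 (by omega)⟩
        have hle : S.card ≤ n + 1 := le_trans card_image_le (by simp)
        omega
      obtain ⟨hEn, hPn⟩ := f_succ_spec E n hex
      have hfn : f E n ≠ f E (n+1) := hne hEn
      have hnewne : ∀ i, i ≤ n → f E (n+1) ≠ f E i := by
        intro i hi hEq
        rcases eq_or_ne i n with rfl | hin
        · exact hfn hEq.symm
        have hiltn : i < n := by omega
        by_cases hi0 : i = 0
        · subst hi0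
          cases n with
          | zero => omega
          | succ m =>
            have h7 : f E (m+2) = 7 := hEq.trans (f_zero E)
            have h1 : f E 1 ∈ N E 7 := memN.mpr (hadj 0 (by omega))
            have h2 : f E (m+1) ∈ N E 7 := by
              apply memN.mpr
              have h := hEn
              rw [Sym2.eq_swap, h7] at h
              exact h
            have hm1 := hinj (m+1) le_rfl 1 (by omega) (one_det hN7 h2 h1)
            -- m = 0
            apply hPn
            rw [pf_fst_succ]
            have hm0 : m = 0 := by omega
            subst hm0
            exact hEq
        · have hv7 : f E i ≠ 7 := fun h =>
            hi0 (hinj i (by omega) 0 (by omega) (h.trans (f_zero E).symm))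
          have ha : f E (i-1) ∈ N E (f E i) := by
            have h := hadj (i-1) (by omega)
            have he : i - 1 + 1 = i := by omega
            rw [he, Sym2.eq_swap] at h
            exact memN.mpr h
          have hb : f E (i+1) ∈ N E (f E i) := memN.mpr (hadj i (by omega))
          have hab : f E (i-1) ≠ f E (i+1) := fun h => by
            have := hinj (i-1) (by omega) (i+1) (by omega) h
            omega
          have hnN : f E n ∈ N E (f E i) := by
            apply memN.mpr
            have h := hEn
            rw [hEq, Sym2.eq_swap] at h
            exact h
          rcases pair_det (hN2 _ hv7) ha hb hab hnN with h | h
          · have := hinj n le_rfl (i-1) (by omega) h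
            omega
          · have hni : n = i + 1 := hinj n le_rfl (i+1) (by omega) h
            apply hPn
            rw [hni] at hEq
            rw [hni, pf_fst_succ]
            exact hEq
      refine ⟨fun i hi => ?_, fun i hi j hj hEq => ?_⟩
      · rcases Nat.lt_succ_iff_lt_or_eq.mp hi with h | rfl
        · exact hadj i h
        · exact hEn
      · by_cases hi' : i ≤ n <;> by_cases hj' : j ≤ n
        · exact hinj i hi' j hj' hEq
        · have hj1 : j = n + 1 := by omega
          subst hj1
          exact absurd hEq.symm (hnewne i hi')
        · have hi1 : i = n + 1 := by omega
          subst hi1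
          exact absurd hEq (hnewne j hj')
        · omega
  obtain ⟨hadj, hinj⟩ := main 7 le_rfl
  -- the only edges are consecutive ones
  have hconsec : ∀ i j, i < j → j ≤ 7 → s(f E i, f E j) ∈ E → j = i + 1 := by
    intro i j hij hj7 hEij
    by_cases hi0 : i = 0
    · subst hi0
      have h1 : f E 1 ∈ N E 7 := memN.mpr (hadj 0 (by omega))
      have hj : f E j ∈ N E 7 := memN.mpr hEij
      have := hinj j (by omega) 1 (by omega) (one_det hN7 hj h1)
      omega
    · have hv7 : f E i ≠ 7 := fun h =>
        hi0 (hinj i (by omega) 0 (by omega) (h.trans (f_zero E).symm))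
      have ha : f E (i-1) ∈ N E (f E i) := by
        have h := hadj (i-1) (by omega)
        have he : i - 1 + 1 = i := by omega
        rw [he, Sym2.eq_swap] at h
        exact memN.mpr h
      have hb : f E (i+1) ∈ N E (f E i) := memN.mpr (hadj i (by omega))
      have hab : f E (i-1) ≠ f E (i+1) := fun h => by
        have := hinj (i-1) (by omega) (i+1) (by omega) h
        omega
      rcases pair_det (hN2 _ hv7) ha hb hab (memN.mpr hEij) with h | h
      · have := hinj j (by omega) (i-1) (by omega) h
        omega
      · have := hinj j (by omega) (i+1) (by omega) h
        omega
  -- surjectivity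
  have hsurj : ∀ v : Fin 8, ∃ i, i ≤ 7 ∧ f E i = v := by
    intro v
    by_contra hcs
    push_neg at hcs
    have hinj8 : Set.InjOn (f E) ↑(range 8) := by
      intro x hx y hy h
      simp only [coe_range, Set.mem_Iio] at hx hy
      exact hinj x (by omega) y (by omega) h
    have hcard8 : ((range 8).image (f E)).card = 8 := by
      rw [card_image_of_injOn hinj8, card_range]
    have hsub : (range 8).image (f E) ⊆ univ.erase v := by
      intro x hx
      obtain ⟨i, hi, rfl⟩ := mem_image.mp hx
      rw [mem_range] at hi
      exact mem_erase.mpr ⟨hcs i (by omega), mem_univ _⟩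
    have := card_le_card hsub
    rw [hcard8, card_erase_of_mem (mem_univ v)] at this
    simp at this
  -- every edge is a consecutive edge
  have hEdecomp : ∀ e, e ∈ E → ∃ m, m ≤ 6 ∧ e = s(f E m, f E (m+1)) := by
    intro e
    induction e using Sym2.ind with
    | _ a b =>
      intro he
      have hab : a ≠ b := hne he
      obtain ⟨i, hi7, rfl⟩ := hsurj a
      obtain ⟨j, hj7, rfl⟩ := hsurj b
      have hij : i ≠ j := fun h => hab (by rw [h])
      rcases lt_or_gt_of_ne hij with h | h
      · have hj := hconsec i j h hj7 he
        refine ⟨i, by omega, ?_⟩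
        rw [hj]
      · have hEji : s(f E j, f E i) ∈ E := by rw [Sym2.eq_swap]; exact he
        have hi := hconsec j i h hi7 hEji
        refine ⟨j, by omega, ?_⟩
        rw [hi]
        exact Sym2.eq_swap
  -- all ranks are 2
  have hr2mid : ∀ m, 1 ≤ m → m ≤ 6 →
      r (s(f E (m-1), f E m)) = 2 ∧ r (s(f E m, f E (m+1))) = 2 := by
    intro m h1 h6
    have hv7 : f E m ≠ 7 := fun h => by
      have := hinj m (by omega) 0 (by omega) (h.trans (f_zero E).symm)
      omega
    have he1 : s(f E (m-1), f E m) ∈ E := by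
      have h := hadj (m-1) (by omega)
      have he : m - 1 + 1 = m := by omega
      rwa [he] at h
    have he2 : s(f E m, f E (m+1)) ∈ E := hadj m (by omega)
    have h12 : s(f E (m-1), f E m) ≠ s(f E m, f E (m+1)) := by
      intro h
      rcases Sym2.eq_iff.mp h with ⟨h1', _⟩ | ⟨h1', _⟩
      · have := hinj (m-1) (by omega) m (by omega) h1'
        omega
      · have := hinj (m-1) (by omega) (m+1) (by omega) h1'
        omega
    have hsub : ({s(f E (m-1), f E m), s(f E m, f E (m+1))} : Finset (Sym2 (Fin 8)))
        ⊆ E.filter (fun e => f E m ∈ e) := by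
      intro x hx
      rcases mem_insert.mp hx with rfl | hx
      · exact mem_filter.mpr ⟨he1, by simp⟩
      · rw [mem_singleton.mp hx]
        exact mem_filter.mpr ⟨he2, by simp⟩
    have hfilt : E.filter (fun e => f E m ∈ e)
        = {s(f E (m-1), f E m), s(f E m, f E (m+1))} := by
      refine (Finset.eq_of_subset_of_card_le hsub ?_).symm
      rw [card_insert_of_notMem (by simpa using h12), card_singleton]
      exact hfcard _ hv7
    have hprod := hfit (f E m)
    rw [hfilt, Finset.prod_pair h12] at hprod
    simp only [if_neg hv7] at hprod
    have hr1 := hent _ he1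
    have hr2 := hent _ he2
    constructor
    · nlinarith
    · nlinarith
  have hrtwo : ∀ e ∈ E, r e = 2 := by
    intro e he
    obtain ⟨m, hm6, rfl⟩ := hEdecomp e he
    rcases Nat.eq_zero_or_pos m with rfl | hm1
    · exact (hr2mid 1 le_rfl (by omega)).1
    · exact (hr2mid m hm1 hm6).2
  -- build the permutation
  have hFinj : Function.Injective (fun x : Fin 8 => f E (7 - x.val)) := by
    intro x y h
    have h1 : 7 - x.val ≤ 7 := by omega
    have h2 : 7 - y.val ≤ 7 := by omega
    have h3 := hinj _ h1 _ h2 h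
    have hx := x.isLt
    have hy := y.isLt
    exact Fin.ext (by omega)
  refine ⟨hrtwo, Equiv.ofBijective _ (Finite.injective_iff_bijective.mp hFinj), ?_, ?_⟩
  · show f E (7 - (7 : Fin 8).val) = 7
    rfl
  · ext e
    simp only [mem_image, mem_univ, true_and, Equiv.ofBijective_apply]
    constructor
    · intro he
      obtain ⟨m, hm6, rfl⟩ := hEdecomp e he
      refine ⟨⟨6 - m, by omega⟩, ?_⟩
      show s(f E (7 - (6 - m)), f E (7 - ((6 - m) + 1))) = s(f E m, f E (m+1))
      have e1 : 7 - (6 - m) = m + 1 := by omega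
      have e2 : 7 - ((6 - m) + 1) = m := by omega
      rw [e1, e2]
      exact Sym2.eq_swap
    · rintro ⟨k, rfl⟩
      have hk := k.isLt
      show s(f E (7 - k.val), f E (7 - (k.val + 1))) ∈ E
      have h1 : 7 - k.val = (6 - k.val) + 1 := by omega
      have h2 : 7 - (k.val + 1) = 6 - k.val := by omega
      rw [h1, h2, Sym2.eq_swap]
      exact hadj (6 - k.val) (by omega)
end

section
/- Let four parties v_1,...,v_4 have dimensions (4,2,2,2). Any fully entangled 4-partite pure state preparable by a finite sequence of single-system quantum communications (each sending fits within the dimension constraints) interleaved with LOCC has Schmidt rank at most 2 across the bipartition v_1 vs. {v_2,v_3,v_4}. -/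
open Matrix Finset

/-- Four parties with local dimensions `(4,2,2,2)` realized as five qubit slots:
slots `0,1` belong to party `0` (dimension 4), slots `2,3,4` to parties `1,2,3`. -/
def slotOwner : Fin 5 → Fin 4 := ![0, 0, 1, 2, 3]

/-- Schmidt rank of a state of the five qubit slots across the bipartition of the four
parties given by `S`. -/
noncomputable def partySchmidtRank (S : Finset (Fin 4)) (ψ : (Fin 5 → Fin 2) → ℂ) : ℕ :=
  Matrix.rank (Matrix.of fun (f : {q // slotOwner q ∈ S} → Fin 2)
      (g : {q // slotOwner q ∉ S} → Fin 2) =>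
    ψ fun q => if h : slotOwner q ∈ S then f ⟨q, h⟩ else g ⟨q, h⟩)

/-- The separable operator `A ⊗ B ⊗ C ⊗ D` with `A` acting on party 0's two qubits and
`B`, `C`, `D` on the single qubits of parties 1, 2, 3. -/
noncomputable def locOp (A : Matrix (Fin 2 × Fin 2) (Fin 2 × Fin 2) ℂ)
    (B C D : Matrix (Fin 2) (Fin 2) ℂ) :
    Matrix (Fin 5 → Fin 2) (Fin 5 → Fin 2) ℂ :=
  Matrix.of fun x y => A (x 0, x 1) (y 0, y 1) * B (x 2) (y 2) * C (x 3) (y 3) * D (x 4) (y 4)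

/-- States preparable by a finite sequence of single-qubit quantum communications
(interleaved with LOCC) within the local dimensions `(4,2,2,2)`, starting from an
unentangled state.  A communication moves one qubit slot of the sender into a receiving
slot of the other party that has been initialized in `|0⟩` (after which the sent slot holds
`|0⟩`); an LOCC step is a deterministic transformation by a complete separable Kraus
family. -/
inductive Preparable : ((Fin 5 → Fin 2) → ℂ) → Prop
  | init : Preparable (fun x => if x = (fun _ => 0) then 1 else 0)
  | locc (φ ψ : (Fin 5 → Fin 2) → ℂ) (n : ℕ)
      (A : Fin n → Matrix (Fin 2 × Fin 2) (Fin 2 × Fin 2) ℂ)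
      (B C D : Fin n → Matrix (Fin 2) (Fin 2) ℂ) :
      Preparable φ →
      (∑ i, (locOp (A i) (B i) (C i) (D i))ᴴ * locOp (A i) (B i) (C i) (D i) = 1) →
      (∀ i, ∃ c : ℂ, c ≠ 0 ∧ (locOp (A i) (B i) (C i) (D i)).mulVec φ = c • ψ) →
      Preparable ψ
  | comm (φ : (Fin 5 → Fin 2) → ℂ) (q q' : Fin 5) :
      slotOwner q ≠ slotOwner q' →
      Preparable φ →
      (∀ x, x q' ≠ 0 → φ x = 0) →
      Preparable (fun x => φ (x ∘ Equiv.swap q q'))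

/-! ### Auxiliary rank lemmas -/

theorem rank_le_card_rows {m n : Type*} [Fintype m] [Fintype n] [DecidableEq m]
    (M : Matrix m n ℂ) (s : Finset m) (h : ∀ i ∉ s, ∀ j, M i j = 0) :
    M.rank ≤ s.card := by
  have hM : M = (Matrix.of fun i (j : s) => if i = (j : m) then (1:ℂ) else 0) *
      (Matrix.of fun (i : s) j => M i j) := by
    ext i j
    rw [Matrix.mul_apply]
    by_cases hi : i ∈ s
    · rw [Finset.sum_eq_single (⟨i, hi⟩ : s)]
      · simp
      · intro b _ hne
        simp only [of_apply]
        rw [if_neg (fun hib : i = (b : m) => hne (Subtype.ext hib.symm)), zero_mul]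
      · simp
    · rw [h i hi]
      exact (Finset.sum_eq_zero fun k _ => by
        simp only [of_apply]
        rw [if_neg (fun hik : i = (k : m) => hi (hik ▸ k.2)), zero_mul]).symm
  have h1 := Matrix.rank_mul_le_right
      (Matrix.of fun i (j : s) => if i = (j : m) then (1:ℂ) else 0)
      (Matrix.of fun (i : s) j => M i j)
  rw [← hM] at h1
  calc M.rank ≤ _ := h1
    _ ≤ Fintype.card s := rank_le_card_height _
    _ = s.card := Fintype.card_coe s

theorem rank_smul_eq {m n : Type*} [Fintype m] [Fintype n] [DecidableEq m]
    (M : Matrix m n ℂ) (c : ℂ) (hc : c ≠ 0) : (c • M).rank = M.rank := by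
  refine le_antisymm ?_ ?_
  · have h : c • M = (c • (1 : Matrix m m ℂ)) * M := by
      rw [Matrix.smul_mul, Matrix.one_mul]
    rw [h]; exact rank_mul_le_right _ _
  · have h : M = (c⁻¹ • (1 : Matrix m m ℂ)) * (c • M) := by
      rw [Matrix.smul_mul, Matrix.one_mul, smul_smul, inv_mul_cancel₀ hc, one_smul]
    conv_lhs => rw [h]
    exact rank_mul_le_right _ _

theorem matrix_mulVec_factor {α β : Type*} [Fintype α] [Fintype β]
    (M : Matrix (Fin 5 → Fin 2) (Fin 5 → Fin 2) ℂ) (φ : (Fin 5 → Fin 2) → ℂ)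
    (e : α × β ≃ (Fin 5 → Fin 2)) (P : Matrix α α ℂ) (Q : Matrix β β ℂ)
    (hfac : ∀ a b a' b', M (e (a, b)) (e (a', b')) = P a a' * Q b b') :
    (Matrix.of fun a b => M.mulVec φ (e (a, b))) =
      P * (Matrix.of fun a b => φ (e (a, b))) * Qᵀ := by
  ext a b
  simp only [of_apply, Matrix.mul_apply, Matrix.mulVec, dotProduct, transpose_apply]
  rw [← Equiv.sum_comp e (fun y => M (e (a, b)) y * φ y), Fintype.sum_prod_type]
  rw [Finset.sum_comm]
  refine Finset.sum_congr rfl fun b' _ => ?_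
  rw [Finset.sum_mul]
  refine Finset.sum_congr rfl fun a' _ => ?_
  rw [hfac]
  ring

theorem rank_mulVec_le {α β : Type*} [Fintype α] [Fintype β]
    (M : Matrix (Fin 5 → Fin 2) (Fin 5 → Fin 2) ℂ) (φ : (Fin 5 → Fin 2) → ℂ)
    (e : α × β ≃ (Fin 5 → Fin 2)) (P : Matrix α α ℂ) (Q : Matrix β β ℂ)
    (hfac : ∀ a b a' b', M (e (a, b)) (e (a', b')) = P a a' * Q b b') :
    (Matrix.of fun a b => M.mulVec φ (e (a, b))).rank ≤
      (Matrix.of fun a b => φ (e (a, b))).rank := by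
  rw [matrix_mulVec_factor M φ e P Q hfac]
  exact le_trans (rank_mul_le_left _ _) (rank_mul_le_right _ _)

/-! ### The gluing equivalence -/

noncomputable def glueE (S : Finset (Fin 4)) :
    ({q // slotOwner q ∈ S} → Fin 2) × ({q // slotOwner q ∉ S} → Fin 2) ≃ (Fin 5 → Fin 2) :=
  (Equiv.piEquivPiSubtypeProd (fun q => slotOwner q ∈ S) fun _ => Fin 2).symm

theorem partySchmidtRank_eq (S : Finset (Fin 4)) (ψ : (Fin 5 → Fin 2) → ℂ) :
    partySchmidtRank S ψ = (Matrix.of fun f g => ψ (glueE S (f, g))).rank := rfl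

theorem glueE_pos (S : Finset (Fin 4)) (f : {q // slotOwner q ∈ S} → Fin 2) (g) (q : Fin 5)
    (h : slotOwner q ∈ S) : glueE S (f, g) q = f ⟨q, h⟩ := dif_pos h

theorem glueE_neg (S : Finset (Fin 4)) (f : {q // slotOwner q ∈ S} → Fin 2) (g) (q : Fin 5)
    (h : slotOwner q ∉ S) : glueE S (f, g) q = g ⟨q, h⟩ := dif_neg h

/-! ### LOCC does not increase any party Schmidt rank -/

theorem locc_rank_le (A : Matrix (Fin 2 × Fin 2) (Fin 2 × Fin 2) ℂ)
    (B C D : Matrix (Fin 2) (Fin 2) ℂ) (φ : (Fin 5 → Fin 2) → ℂ) (k : Fin 4) :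
    partySchmidtRank {k} ((locOp A B C D).mulVec φ) ≤ partySchmidtRank {k} φ := by
  rw [partySchmidtRank_eq, partySchmidtRank_eq]
  fin_cases k
  · exact rank_mulVec_le _ φ (glueE {0})
      (Matrix.of fun f f' => A (f ⟨0, by decide⟩, f ⟨1, by decide⟩)
        (f' ⟨0, by decide⟩, f' ⟨1, by decide⟩))
      (Matrix.of fun g g' => B (g ⟨2, by decide⟩) (g' ⟨2, by decide⟩) *
        C (g ⟨3, by decide⟩) (g' ⟨3, by decide⟩) * D (g ⟨4, by decide⟩) (g' ⟨4, by decide⟩))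
      (fun f g f' g' => by
        simp only [locOp, Matrix.of_apply]
        rw [glueE_pos {0} f g 0 (by decide), glueE_pos {0} f g 1 (by decide),
          glueE_neg {0} f g 2 (by decide), glueE_neg {0} f g 3 (by decide),
          glueE_neg {0} f g 4 (by decide), glueE_pos {0} f' g' 0 (by decide),
          glueE_pos {0} f' g' 1 (by decide), glueE_neg {0} f' g' 2 (by decide),
          glueE_neg {0} f' g' 3 (by decide), glueE_neg {0} f' g' 4 (by decide)]
        ring)
  · exact rank_mulVec_le _ φ (glueE {1})
      (Matrix.of fun f f' => B (f ⟨2, by decide⟩) (f' ⟨2, by decide⟩))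
      (Matrix.of fun g g' => A (g ⟨0, by decide⟩, g ⟨1, by decide⟩)
        (g' ⟨0, by decide⟩, g' ⟨1, by decide⟩) *
        C (g ⟨3, by decide⟩) (g' ⟨3, by decide⟩) * D (g ⟨4, by decide⟩) (g' ⟨4, by decide⟩))
      (fun f g f' g' => by
        simp only [locOp, Matrix.of_apply]
        rw [glueE_neg {1} f g 0 (by decide), glueE_neg {1} f g 1 (by decide),
          glueE_pos {1} f g 2 (by decide), glueE_neg {1} f g 3 (by decide),
          glueE_neg {1} f g 4 (by decide), glueE_neg {1} f' g' 0 (by decide),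
          glueE_neg {1} f' g' 1 (by decide), glueE_pos {1} f' g' 2 (by decide),
          glueE_neg {1} f' g' 3 (by decide), glueE_neg {1} f' g' 4 (by decide)]
        ring)
  · exact rank_mulVec_le _ φ (glueE {2})
      (Matrix.of fun f f' => C (f ⟨3, by decide⟩) (f' ⟨3, by decide⟩))
      (Matrix.of fun g g' => A (g ⟨0, by decide⟩, g ⟨1, by decide⟩)
        (g' ⟨0, by decide⟩, g' ⟨1, by decide⟩) *
        B (g ⟨2, by decide⟩) (g' ⟨2, by decide⟩) * D (g ⟨4, by decide⟩) (g' ⟨4, by decide⟩))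
      (fun f g f' g' => by
        simp only [locOp, Matrix.of_apply]
        rw [glueE_neg {2} f g 0 (by decide), glueE_neg {2} f g 1 (by decide),
          glueE_neg {2} f g 2 (by decide), glueE_pos {2} f g 3 (by decide),
          glueE_neg {2} f g 4 (by decide), glueE_neg {2} f' g' 0 (by decide),
          glueE_neg {2} f' g' 1 (by decide), glueE_neg {2} f' g' 2 (by decide),
          glueE_pos {2} f' g' 3 (by decide), glueE_neg {2} f' g' 4 (by decide)]
        ring)
  · exact rank_mulVec_le _ φ (glueE {3})
      (Matrix.of fun f f' => D (f ⟨4, by decide⟩) (f' ⟨4, by decide⟩))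
      (Matrix.of fun g g' => A (g ⟨0, by decide⟩, g ⟨1, by decide⟩)
        (g' ⟨0, by decide⟩, g' ⟨1, by decide⟩) *
        B (g ⟨2, by decide⟩) (g' ⟨2, by decide⟩) * C (g ⟨3, by decide⟩) (g' ⟨3, by decide⟩))
      (fun f g f' g' => by
        simp only [locOp, Matrix.of_apply]
        rw [glueE_neg {3} f g 0 (by decide), glueE_neg {3} f g 1 (by decide),
          glueE_neg {3} f g 2 (by decide), glueE_neg {3} f g 3 (by decide),
          glueE_pos {3} f g 4 (by decide), glueE_neg {3} f' g' 0 (by decide),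
          glueE_neg {3} f' g' 1 (by decide), glueE_neg {3} f' g' 2 (by decide),
          glueE_neg {3} f' g' 3 (by decide), glueE_pos {3} f' g' 4 (by decide)]
        ring)

theorem locc_psr_le (A : Matrix (Fin 2 × Fin 2) (Fin 2 × Fin 2) ℂ)
    (B C D : Matrix (Fin 2) (Fin 2) ℂ) (φ ψ : (Fin 5 → Fin 2) → ℂ) (c : ℂ) (hc : c ≠ 0)
    (hEq : (locOp A B C D).mulVec φ = c • ψ) (k : Fin 4) :
    partySchmidtRank {k} ψ ≤ partySchmidtRank {k} φ := by
  have h1 := locc_rank_le A B C D φ k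
  rw [hEq] at h1
  have h2 : partySchmidtRank {k} (c • ψ) = partySchmidtRank {k} ψ := by
    rw [partySchmidtRank_eq, partySchmidtRank_eq,
      show (Matrix.of fun f g => (c • ψ) (glueE {k} (f, g))) =
        c • (Matrix.of fun f g => ψ (glueE {k} (f, g))) from by ext f g; simp]
    exact rank_smul_eq _ c hc
  rw [h2] at h1
  exact h1

/-! ### Support bounds -/

theorem rank_le_two_aux (ψ : (Fin 5 → Fin 2) → ℂ)
    (a b : {r : Fin 5 // slotOwner r ∈ ({0} : Finset (Fin 4))})
    (hall : ∀ r, r = a ∨ r = b) (hab : b ≠ a)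
    (hsupp : ∀ x : Fin 5 → Fin 2, x a.val ≠ 0 → ψ x = 0) :
    partySchmidtRank {0} ψ ≤ 2 := by
  rw [partySchmidtRank_eq]
  refine le_trans (rank_le_card_rows _
    (Finset.image (fun u : Fin 2 => fun r => if r = a then 0 else u) Finset.univ) ?_)
    (le_trans Finset.card_image_le (by simp))
  intro f hf g
  simp only [of_apply]
  by_cases h0 : f a = 0
  · refine absurd (Finset.mem_image.mpr ⟨f b, Finset.mem_univ _, ?_⟩) hf
    funext r
    rcases hall r with h | h <;> subst h
    · rw [if_pos rfl, h0]
    · rw [if_neg hab]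
  · refine hsupp _ ?_
    rw [glueE_pos _ f g a.val a.2]
    exact h0

theorem rank_le_one_aux (ψ : (Fin 5 → Fin 2) → ℂ) (k : Fin 4)
    (a : {r : Fin 5 // slotOwner r ∈ ({k} : Finset (Fin 4))})
    (hall : ∀ r, r = a)
    (hsupp : ∀ x : Fin 5 → Fin 2, x a.val ≠ 0 → ψ x = 0) :
    partySchmidtRank {k} ψ ≤ 1 := by
  rw [partySchmidtRank_eq]
  refine le_trans (rank_le_card_rows _ {fun _ => 0} ?_) (by simp)
  intro f hf g
  simp only [of_apply]
  by_cases h0 : f a = 0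
  · refine absurd (Finset.mem_singleton.mpr ?_) hf
    funext r
    rw [hall r, h0]
  · refine hsupp _ ?_
    rw [glueE_pos _ f g a.val a.2]
    exact h0

/-! ### The invariant -/

theorem invariant (ψ : (Fin 5 → Fin 2) → ℂ) (h : Preparable ψ) :
    partySchmidtRank {0} ψ ≤ 2 ∨
      ∃ k : Fin 4, k ≠ 0 ∧ partySchmidtRank {k} ψ ≤ 1 := by
  induction h with
  | init =>
    left
    rw [partySchmidtRank_eq]
    refine le_trans (le_trans (rank_le_card_rows _ {fun _ => 0} ?_) (by simp)) one_le_two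
    intro f hf g
    simp only [of_apply]
    rw [if_neg]
    intro hgl
    refine hf (Finset.mem_singleton.mpr ?_)
    funext r
    have h1 := congrFun hgl r.val
    rwa [glueE_pos _ f g r.val r.2] at h1
  | locc φ ψ n A B C D hφ hsum hK ih =>
    rcases n with - | n
    · exfalso
      simp only [Finset.univ_eq_empty, Finset.sum_empty] at hsum
      have h2 := congrFun (congrFun hsum (fun _ => 0)) (fun _ => 0)
      simp [Matrix.one_apply] at h2
    · obtain ⟨c, hc, hEq⟩ := hK 0
      rcases ih with h | ⟨k, hk, h⟩
      · exact Or.inl (le_trans (locc_psr_le (A 0) (B 0) (C 0) (D 0) φ ψ c hc hEq 0) h)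
      · exact Or.inr ⟨k, hk, le_trans (locc_psr_le (A 0) (B 0) (C 0) (D 0) φ ψ c hc hEq k) h⟩
  | comm φ q q' hqq' hφ hsup ih =>
    clear ih
    have hsupp : ∀ x : Fin 5 → Fin 2, x q ≠ 0 →
        (fun x => φ (x ∘ Equiv.swap q q')) x = 0 := by
      intro x hx
      refine hsup _ ?_
      simpa [Equiv.swap_apply_right] using hx
    fin_cases q
    · exact Or.inl (rank_le_two_aux _ ⟨0, by decide⟩ ⟨1, by decide⟩ (by decide) (by decide) hsupp)
    · exact Or.inl (rank_le_two_aux _ ⟨1, by decide⟩ ⟨0, by decide⟩ (by decide) (by decide) hsupp)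
    · exact Or.inr ⟨1, by decide, rank_le_one_aux _ 1 ⟨2, by decide⟩ (by decide) hsupp⟩
    · exact Or.inr ⟨2, by decide, rank_le_one_aux _ 2 ⟨3, by decide⟩ (by decide) hsupp⟩
    · exact Or.inr ⟨3, by decide, rank_le_one_aux _ 3 ⟨4, by decide⟩ (by decide) hsupp⟩

/-- with local dimensions `(4,2,2,2)`, any fully entangled four-partite pure
state preparable by a finite sequence of single-qubit quantum communications interleaved
with LOCC has Schmidt rank at most `2` across the bipartition `v_1` vs. `{v_2,v_3,v_4}`. -/
theorem preparable_fully_entangled_schmidtRank_le_two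
    (ψ : (Fin 5 → Fin 2) → ℂ) (hprep : Preparable ψ)
    (hent : ∀ S : Finset (Fin 4), S ≠ ∅ → S ≠ Finset.univ → 2 ≤ partySchmidtRank S ψ) :
    partySchmidtRank {0} ψ ≤ 2 := by
  rcases invariant ψ hprep with h | ⟨k, hk, h⟩
  · exact h
  · exfalso
    have h2 := hent {k} (Finset.singleton_ne_empty k) (by
      intro hu
      have hcard : ({k} : Finset (Fin 4)).card = (Finset.univ : Finset (Fin 4)).card := by
        rw [hu]
      simp [Finset.card_univ] at hcard)
    omega
end
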